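/- arXiv:2002.07460 — 9 statements merged into one kernel-verified Lean document; each statement's English description precedes it below -/
import Mathlib

section
/- Let Γ be a lattice in ℝ^d and R a linear isometry. The set of scaling factors Scal_Γ(R) = {β ∈ ℝ : βRΓ ⊆ Γ} equals den_Γ(R)·ℤ, where den_Γ(R) is the smallest positive element of Scal_Γ(R), provided R is a similarity isometry of Γ (i.e., Scal_Γ(R) ≠ {0}). -/
/-!
The scaling factors of a map `R` with respect to `Γ` form an additive subgroup of `ℝ`, and a
subgroup of an archimedean group with a least positive element is cyclic, generated by it.
-/

section ScalingFactors

variable {E : Type*} [AddCommGroup E] [Module ℝ E]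

def scalingFactors (Γ : Submodule ℤ E) (R : E → E) : AddSubgroup ℝ where
  carrier := {β | ∀ γ ∈ Γ, β • R γ ∈ Γ}
  zero_mem' _ _ := by simp
  add_mem' hβ hβ' γ hγ := by simpa only [add_smul] using Γ.add_mem (hβ γ hγ) (hβ' γ hγ)
  neg_mem' hβ γ hγ := by simpa only [neg_smul] using Γ.neg_mem (hβ γ hγ)

@[simp]
theorem mem_scalingFactors {Γ : Submodule ℤ E} {R : E → E} {β : ℝ} :
    β ∈ scalingFactors Γ R ↔ ∀ γ ∈ Γ, β • R γ ∈ Γ :=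
  Iff.rfl

theorem scalingFactors_eq_zmultiples {Γ : Submodule ℤ E} {R : E → E} {den : ℝ}
    (hden : IsLeast {β : ℝ | 0 < β ∧ ∀ γ ∈ Γ, β • R γ ∈ Γ} den) :
    scalingFactors Γ R = AddSubgroup.zmultiples den := by
  rw [AddSubgroup.zmultiples_eq_closure]
  exact AddSubgroup.cyclic_of_min (by simpa only [mem_scalingFactors, and_comm] using hden)

end ScalingFactors

theorem stmt3_general (d : ℕ) (Γ : Submodule ℤ (EuclideanSpace ℝ (Fin d)))
    (R : EuclideanSpace ℝ (Fin d) ≃ₗᵢ[ℝ] EuclideanSpace ℝ (Fin d))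
    (den : ℝ)
    (hden : IsLeast {β : ℝ | 0 < β ∧ ∀ γ ∈ Γ, β • R γ ∈ Γ} den) :
    {β : ℝ | ∀ γ ∈ Γ, β • R γ ∈ Γ} = {β : ℝ | ∃ k : ℤ, β = (k : ℝ) * den} := by
  ext β
  have hβ := SetLike.ext_iff.mp (scalingFactors_eq_zmultiples hden) β
  simp only [mem_scalingFactors, AddSubgroup.mem_zmultiples_iff, zsmul_eq_mul] at hβ
  simp only [Set.mem_ofPred_eq, hβ, eq_comm]

/-- If R is a similarity isometry of a lattice Γ, then Scal_Γ(R) = den_Γ(R)·ℤ,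
where den_Γ(R) is the smallest positive element of Scal_Γ(R). -/
theorem stmt3 (d : ℕ) (Γ : Submodule ℤ (EuclideanSpace ℝ (Fin d)))
    [DiscreteTopology Γ] [IsZLattice ℝ Γ]
    (R : EuclideanSpace ℝ (Fin d) ≃ₗᵢ[ℝ] EuclideanSpace ℝ (Fin d))
    (den : ℝ)
    (hsim : ∃ β > (0 : ℝ), ∀ γ ∈ Γ, β • R γ ∈ Γ)
    (hden : IsLeast {β : ℝ | 0 < β ∧ ∀ γ ∈ Γ, β • R γ ∈ Γ} den) :
    {β : ℝ | ∀ γ ∈ Γ, β • R γ ∈ Γ} = {β : ℝ | ∃ k : ℤ, β = (k : ℝ) * den} :=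
  stmt3_general d Γ R den hden
end

section
/- Let Γ be a lattice in ℝ^d and R a linear isometry. Then R is a similarity isometry of Γ (i.e., βRΓ ⊆ Γ for some β > 0) if and only if there exists α > 0 such that Γ ∩ αRΓ is a subgroup of finite index in Γ. -/
/-!
An injective linear image `f Γ` of a free `ℤ`-module of finite rank has the same rank as `Γ`, so
if `f Γ ⊆ Γ` it has finite index in `Γ`. Conversely, if `Γ ∩ αRΓ` has index `m` in `Γ`, then
`mΓ ⊆ αRΓ`, i.e. `(m/α) R⁻¹ Γ ⊆ Γ`. The first fact, applied to `(m/α) R⁻¹`, yields `k ≠ 0` with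
`kΓ ⊆ (m/α) R⁻¹ Γ`, that is `(kα/m) R Γ ⊆ Γ`.
-/

namespace Submodule

section Int

variable {M : Type*} [AddCommGroup M]

theorem relIndex_ne_zero_of_le_of_linearEquiv {Γ L : Submodule ℤ M} [Module.Free ℤ Γ]
    [Module.Finite ℤ Γ] (hle : L ≤ Γ) (e : L ≃ₗ[ℤ] Γ) :
    L.toAddSubgroup.relIndex Γ.toAddSubgroup ≠ 0 := by
  have : Finite (Γ ⧸ L.comap Γ.subtype) :=
    finiteQuotientOfFreeOfRankEq _ ((comapSubtypeEquivOfLe hle).trans e).finrank_eq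
  exact AddSubgroup.index_ne_zero_of_finite (hH := this)

theorem relIndex_map_ne_zero_of_map_le {Γ : Submodule ℤ M} [Module.Free ℤ Γ]
    [Module.Finite ℤ Γ] {f : M →ₗ[ℤ] M} (hf : Function.Injective f) (hle : Γ.map f ≤ Γ) :
    (Γ.map f).toAddSubgroup.relIndex Γ.toAddSubgroup ≠ 0 :=
  relIndex_ne_zero_of_le_of_linearEquiv hle (equivMapOfInjective f hf Γ).symm

end Int

section Real

variable {E : Type*} [AddCommGroup E] [Module ℝ E] (Γ : Submodule ℤ E)

theorem relIndex_map_smul_ne_zero [Module.Free ℤ Γ] [Module.Finite ℤ Γ] (T : E ≃ₗ[ℝ] E)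
    {c : ℝ} (hc : c ≠ 0) (hT : ∀ γ ∈ Γ, c • T γ ∈ Γ) :
    (Γ.map ((c • T.toLinearMap).restrictScalars ℤ)).toAddSubgroup.relIndex
      Γ.toAddSubgroup ≠ 0 :=
  relIndex_map_ne_zero_of_map_le (fun _ _ h ↦ T.injective (smul_right_injective E hc h))
    (map_le_iff_le_comap.2 hT)

theorem relIndex_map_smul_div_smul_symm_mem (T : E ≃ₗ[ℝ] E) {c : ℝ} (hc : c ≠ 0) {γ : E}
    (hγ : γ ∈ Γ) :
    ((Γ.map ((c • T.toLinearMap).restrictScalars ℤ)).toAddSubgroup.relIndex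
      Γ.toAddSubgroup / c : ℝ) • T.symm γ ∈ Γ := by
  set L := Γ.map ((c • T.toLinearMap).restrictScalars ℤ)
  set n := L.toAddSubgroup.relIndex Γ.toAddSubgroup
  obtain ⟨γ', hγ', hγ'_eq⟩ : n • γ ∈ L := AddSubgroup.nsmul_relIndex_mem L.toAddSubgroup hγ
  replace hγ'_eq : c • T γ' = n • γ := hγ'_eq
  suffices (n / c : ℝ) • T.symm γ = γ' by rwa [this]
  calc (n / c : ℝ) • T.symm γ = c⁻¹ • T.symm ((n : ℝ) • γ) := by
        rw [map_smul, smul_smul, div_eq_inv_mul]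
    _ = c⁻¹ • T.symm (c • T γ') := by rw [Nat.cast_smul_eq_nsmul, hγ'_eq]
    _ = γ' := by rw [map_smul, T.symm_apply_apply, inv_smul_smul₀ hc]

end Real

end Submodule

/-- R is a similarity isometry of Γ iff there is α > 0 such that Γ ∩ αRΓ is a
subgroup of finite index in Γ. -/
theorem stmt5 (d : ℕ) (Γ : Submodule ℤ (EuclideanSpace ℝ (Fin d)))
    [DiscreteTopology Γ] [IsZLattice ℝ Γ]
    (R : EuclideanSpace ℝ (Fin d) ≃ₗᵢ[ℝ] EuclideanSpace ℝ (Fin d)) :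
    (∃ β > (0 : ℝ), ∀ γ ∈ Γ, β • R γ ∈ Γ) ↔
      ∃ α > (0 : ℝ),
        ((Γ.map ((α • (R.toLinearEquiv.toLinearMap :
            EuclideanSpace ℝ (Fin d) →ₗ[ℝ] EuclideanSpace ℝ (Fin d))).restrictScalars
            ℤ)).toAddSubgroup.relIndex Γ.toAddSubgroup) ≠ 0 := by
  have : Module.Finite ℤ Γ := ZLattice.module_finite ℝ Γ
  have : Module.Free ℤ Γ := ZLattice.module_free ℝ Γ
  refine ⟨fun ⟨β, hβ, hR⟩ ↦ ⟨β, hβ,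
    Submodule.relIndex_map_smul_ne_zero Γ R.toLinearEquiv hβ.ne' hR⟩, ?_⟩
  rintro ⟨α, hα, hm⟩
  have hc : (_ / α : ℝ) ≠ 0 := div_ne_zero (Nat.cast_ne_zero.2 hm) hα.ne'
  have hk := Submodule.relIndex_map_smul_ne_zero Γ R.toLinearEquiv.symm hc
    fun _ hγ ↦ Submodule.relIndex_map_smul_div_smul_symm_mem Γ R.toLinearEquiv hα.ne' hγ
  exact ⟨_, div_pos (Nat.cast_pos.2 (Nat.pos_of_ne_zero hk))
    (div_pos (Nat.cast_pos.2 (Nat.pos_of_ne_zero hm)) hα), fun _ hγ ↦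
    Submodule.relIndex_map_smul_div_smul_symm_mem Γ R.toLinearEquiv.symm hc hγ⟩
end

section
/- Let L = ⋃_{k=0}^{m−1} (x_k + Γ) be a point packing generated by a lattice Γ ⊆ ℝ^d, and suppose R is a similarity isometry of L with β ∈ Scal_L(R). Then R is a similarity isometry of Γ, and for every k there exist n distinct indices j_1, …, j_n ∈ {0,…,m−1}, where n = [βRΓ : (Γ ∩ βRΓ)], such that βRx_k − x_{j_i} ∈ Γ + βRΓ for all i. -/
/-!
Work modulo Γ. The image of a translate `a + H` of a subgroup in `G ⧸ Γ` is a translate of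
`H.map (mk' Γ)`, which has `Γ.relIndex H` elements. If `a + H` lies in the packing, this image
sits inside the set of the pairwise distinct classes of the `x k`, so the cosets `x j + Γ` met by
`a + H` are counted exactly by `Γ.relIndex H`. For `H = βRΓ` and `a = βR x k` this is the second
claim; in particular `N = Γ.relIndex H` is finite and nonzero, so `N • βRγ ∈ Γ` for all `γ ∈ Γ`.
-/

open QuotientAddGroup

variable {G ι : Type*} [AddCommGroup G]

theorem mem_iUnion_image_add_left_iff (x : ι → G) (S : Set G) (v : G) :
    v ∈ ⋃ k, (fun γ => x k + γ) '' S ↔ ∃ k, v - x k ∈ S := by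
  simp [sub_eq_neg_add]

namespace AddSubgroup

theorem relIndex_eq_card_map_mk' (Γ H : AddSubgroup G) :
    Γ.relIndex H = Nat.card (H.map (mk' Γ)) := by
  rw [← relIndex_bot_left, ← relIndex_comap, AddMonoidHom.comap_bot, ker_mk']

variable (Γ : AddSubgroup G) {x : ι → G} (H : AddSubgroup G) (a : G)

theorem ncard_setOf_coset_meets_translate (hx : ∀ i j, i ≠ j → x i - x j ∉ Γ)
    (hcover : ∀ h ∈ H, ∃ k, a + h - x k ∈ Γ) :
    {j | ∃ h ∈ H, a + h - x j ∈ Γ}.ncard = Γ.relIndex H := by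
  let y : ι → G ⧸ Γ := fun j => mk' Γ (x j - a)
  have hy : Function.Injective y := by
    intro i j hij
    by_contra hne
    refine hx i j hne ?_
    simpa using (eq_iff_sub_mem).mp hij
  have hpre : {j | ∃ h ∈ H, a + h - x j ∈ Γ} = y ⁻¹' (H.map (mk' Γ)) := by
    ext j
    simp only [Set.mem_preimage, SetLike.mem_coe, mem_map, mk'_apply,
      eq_iff_sub_mem, y]
    refine exists_congr fun h => and_congr_right fun _ => ?_
    rw [show h - (x j - a) = a + h - x j by abel]
  rw [hpre, Set.ncard_preimage_of_injective_subset_range hy, relIndex_eq_card_map_mk',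
    ← Nat.card_coe_set_eq, SetLike.coe_sort_coe]
  rintro _ ⟨h, hh, rfl⟩
  obtain ⟨k, hk⟩ := hcover h hh
  refine ⟨k, (eq_iff_sub_mem).mpr ?_⟩
  rwa [show x k - a - h = -(a + h - x k) by abel, neg_mem_iff]

theorem relIndex_ne_zero_of_translate_covered [Finite ι] (hx : ∀ i j, i ≠ j → x i - x j ∉ Γ)
    (hcover : ∀ h ∈ H, ∃ k, a + h - x k ∈ Γ) : Γ.relIndex H ≠ 0 := by
  rw [← ncard_setOf_coset_meets_translate Γ H a hx hcover]
  obtain ⟨k, hk⟩ := hcover 0 H.zero_mem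
  have hne : {j | ∃ h ∈ H, a + h - x j ∈ Γ}.Nonempty := ⟨k, 0, H.zero_mem, hk⟩
  exact ((Set.ncard_pos (Set.toFinite _)).mpr hne).ne'

end AddSubgroup

theorem stmt6_general (d m : ℕ) (hm : 0 < m)
    (Γ : Submodule ℤ (EuclideanSpace ℝ (Fin d)))
    (x : Fin m → EuclideanSpace ℝ (Fin d))
    (hdist : ∀ k1 k2 : Fin m, k1 ≠ k2 → x k1 - x k2 ∉ Γ)
    (L : Set (EuclideanSpace ℝ (Fin d)))
    (hL : L = ⋃ k : Fin m, (fun γ => x k + γ) '' (Γ : Set (EuclideanSpace ℝ (Fin d))))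
    (R : EuclideanSpace ℝ (Fin d) ≃ₗᵢ[ℝ] EuclideanSpace ℝ (Fin d))
    (β : ℝ) (hβ : 0 < β)
    (hsub : (fun v => β • R v) '' L ⊆ L) :
    (∃ β' > (0 : ℝ), ∀ γ ∈ Γ, β' • R γ ∈ Γ) ∧
    ∀ k : Fin m, ∃ J : Finset (Fin m),
      J.card = Γ.toAddSubgroup.relIndex
        (Γ.map ((β • (R.toLinearEquiv.toLinearMap :
          EuclideanSpace ℝ (Fin d) →ₗ[ℝ] EuclideanSpace ℝ (Fin d))).restrictScalars
          ℤ)).toAddSubgroup ∧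
      ∀ j ∈ J, ∃ γ ∈ Γ, ∃ γ' ∈ Γ, β • R (x k) - x j = γ + β • R γ' := by
  set H := (Γ.map ((β • (R.toLinearEquiv.toLinearMap :
    EuclideanSpace ℝ (Fin d) →ₗ[ℝ] EuclideanSpace ℝ (Fin d))).restrictScalars
      ℤ)).toAddSubgroup
  have hmemL : ∀ v, v ∈ L ↔ ∃ k, v - x k ∈ Γ :=
    fun v => hL ▸ mem_iUnion_image_add_left_iff x _ v
  have hcover : ∀ k, ∀ h ∈ H, ∃ j, β • R (x k) + h - x j ∈ Γ := by
    rintro k _ ⟨γ', hγ', rfl⟩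
    have : x k + γ' ∈ L := (hmemL _).mpr ⟨k, by simpa using hγ'⟩
    simpa using (hmemL _).mp (hsub ⟨_, this, rfl⟩)
  have hx : ∀ k1 k2, k1 ≠ k2 → x k1 - x k2 ∉ Γ.toAddSubgroup := hdist
  refine ⟨?_, fun k => ?_⟩
  · set N := Γ.toAddSubgroup.relIndex H
    have hN : N ≠ 0 :=
      Γ.toAddSubgroup.relIndex_ne_zero_of_translate_covered H _ hx (hcover ⟨0, hm⟩)
    refine ⟨N * β, by positivity, fun γ hγ => ?_⟩
    have hβRγ : β • R γ ∈ H := ⟨γ, hγ, rfl⟩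
    rw [mul_smul, Nat.cast_smul_eq_nsmul]
    exact Γ.toAddSubgroup.nsmul_relIndex_mem hβRγ
  · let J := {j | ∃ h ∈ H, β • R (x k) + h - x j ∈ Γ}
    refine ⟨(Set.toFinite J).toFinset, ?_, fun j hj => ?_⟩
    · rw [← Set.ncard_eq_toFinset_card]
      exact Γ.toAddSubgroup.ncard_setOf_coset_meets_translate H _ hx (hcover k)
    · obtain ⟨_, ⟨γ', hγ', rfl⟩, hγ⟩ := (Set.Finite.mem_toFinset _).mp hj
      refine ⟨β • R (x k) + β • R γ' - x j, hγ, -γ', Γ.neg_mem hγ', ?_⟩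
      simp only [map_neg, smul_neg]
      abel

/-- Theorem 3.2 (forward direction): if βRL ⊆ L for a point packing L, then R is a
similarity isometry of Γ and each component of βRL meets exactly
n = [βRΓ : (Γ ∩ βRΓ)] components of L. -/
theorem stmt6 (d m : ℕ) (hm : 0 < m)
    (Γ : Submodule ℤ (EuclideanSpace ℝ (Fin d)))
    [DiscreteTopology Γ] [IsZLattice ℝ Γ]
    (x : Fin m → EuclideanSpace ℝ (Fin d))
    (h0 : x ⟨0, hm⟩ = 0)
    (hdist : ∀ k1 k2 : Fin m, k1 ≠ k2 → x k1 - x k2 ∉ Γ)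
    (L : Set (EuclideanSpace ℝ (Fin d)))
    (hL : L = ⋃ k : Fin m, (fun γ => x k + γ) '' (Γ : Set (EuclideanSpace ℝ (Fin d))))
    (R : EuclideanSpace ℝ (Fin d) ≃ₗᵢ[ℝ] EuclideanSpace ℝ (Fin d))
    (β : ℝ) (hβ : 0 < β)
    (hsub : (fun v => β • R v) '' L ⊆ L) :
    (∃ β' > (0 : ℝ), ∀ γ ∈ Γ, β' • R γ ∈ Γ) ∧
    ∀ k : Fin m, ∃ J : Finset (Fin m),
      J.card = Γ.toAddSubgroup.relIndex
        (Γ.map ((β • (R.toLinearEquiv.toLinearMap :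
          EuclideanSpace ℝ (Fin d) →ₗ[ℝ] EuclideanSpace ℝ (Fin d))).restrictScalars
          ℤ)).toAddSubgroup ∧
      ∀ j ∈ J, ∃ γ ∈ Γ, ∃ γ' ∈ Γ, β • R (x k) - x j = γ + β • R γ' :=
  stmt6_general d m hm Γ x hdist L hL R β hβ hsub
end

section
/- Let L = ⋃_{k=0}^{m−1} (x_k + Γ) be a point packing generated by a lattice Γ ⊆ ℝ^d, R a similarity isometry of Γ, and β > 0 such that Γ ∩ βRΓ has finite index in βRΓ. If for every k ∈ {0,…,m−1} there exist n = [βRΓ : (Γ ∩ βRΓ)] distinct indices j_1,…,j_n with βRx_k − x_{j_i} ∈ Γ + βRΓ for all i, then βRL ⊆ L. -/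
/-!
Fix a shift `x k`. The differences `βR x_k - x_j`, `j ∈ J`, lie in `Γ + βRΓ` and are pairwise
incongruent modulo `Γ`, because the `x_j` are. Since `(Γ + βRΓ)/Γ ≅ βRΓ/(Γ ∩ βRΓ)` has
exactly `n = |J|` elements, they represent every class; in particular, for `γ ∈ Γ` some
`βR x_k - x_j` is congruent to `-βRγ`, which says `βR(x_k + γ) ∈ x_j + Γ`.
-/

namespace AddSubgroup

variable {G : Type*} [AddCommGroup G]

theorem exists_sub_mem_of_card_eq_relIndex {ι : Type*} {Γ S : AddSubgroup G}
    (hfin : Γ.relIndex S ≠ 0) (hcard : Nat.card ι = Γ.relIndex S) (z : ι → G)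
    (hzS : ∀ i, z i ∈ S) (hz : ∀ i j, z i - z j ∈ Γ → i = j) {s : G} (hs : s ∈ S) :
    ∃ i, z i - s ∈ Γ := by
  have : Finite (S ⧸ Γ.addSubgroupOf S) := Nat.finite_of_card_ne_zero hfin
  let g : ι → S ⧸ Γ.addSubgroupOf S := fun i => ((⟨z i, hzS i⟩ : S) : S ⧸ _)
  have hg : Function.Injective g := fun i j hij => by
    rw [QuotientAddGroup.eq, mem_addSubgroupOf, neg_add_eq_sub] at hij
    exact (hz j i hij).symm
  obtain ⟨i, hi⟩ := (hg.bijective_of_nat_card_le hcard.ge).2 ((⟨s, hs⟩ : S) : S ⧸ _)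
  rw [QuotientAddGroup.eq, mem_addSubgroupOf, neg_add_eq_sub] at hi
  exact ⟨i, by simpa using neg_mem hi⟩

theorem image_iUnion_coset_subset_of_card_eq_relIndex {ι : Type*} (Γ : AddSubgroup G)
    (f : G →+ G) (x : ι → G)
    (hdist : ∀ i j, i ≠ j → x i - x j ∉ Γ) (hfin : Γ.relIndex (Γ.map f) ≠ 0)
    (hcond : ∀ k, ∃ J : Finset ι, J.card = Γ.relIndex (Γ.map f) ∧
      ∀ j ∈ J, f (x k) - x j ∈ Γ ⊔ Γ.map f) :
    f '' ⋃ k, (x k + ·) '' (Γ : Set G) ⊆ ⋃ k, (x k + ·) '' (Γ : Set G) := by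
  rintro _ ⟨_, ⟨_, ⟨k, rfl⟩, γ, hγ, rfl⟩, rfl⟩
  obtain ⟨J, hJcard, hJ⟩ := hcond k
  have hindex : Γ.relIndex (Γ ⊔ Γ.map f) = Γ.relIndex (Γ.map f) := relIndex_sup_left _ _
  have hfγ : -f γ ∈ Γ ⊔ Γ.map f := neg_mem (mem_sup_right (mem_map_of_mem f hγ))
  have hincong : ∀ i j : J, (f (x k) - x i) - (f (x k) - x j) ∈ Γ → i = j :=
    fun i j hij => Subtype.ext <| by_contra fun hne =>
      hdist j i (Ne.symm hne) (by simpa using hij)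
  obtain ⟨⟨j, _⟩, hjγ⟩ := exists_sub_mem_of_card_eq_relIndex (hindex ▸ hfin)
    (by rw [Nat.card_eq_finsetCard, hJcard, hindex]) (fun j : J => f (x k) - x j)
    (fun j => hJ j j.2) hincong hfγ
  refine Set.mem_iUnion.2 ⟨j, f (x k + γ) - x j, ?_, add_sub_cancel _ _⟩
  simpa [sub_eq_add_neg, add_right_comm] using hjγ

end AddSubgroup

theorem stmt7_general (d m : ℕ)
    (Γ : Submodule ℤ (EuclideanSpace ℝ (Fin d)))
    (x : Fin m → EuclideanSpace ℝ (Fin d))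
    (hdist : ∀ k1 k2 : Fin m, k1 ≠ k2 → x k1 - x k2 ∉ Γ)
    (L : Set (EuclideanSpace ℝ (Fin d)))
    (hL : L = ⋃ k : Fin m, (fun γ => x k + γ) '' (Γ : Set (EuclideanSpace ℝ (Fin d))))
    (R : EuclideanSpace ℝ (Fin d) ≃ₗᵢ[ℝ] EuclideanSpace ℝ (Fin d))
    (β : ℝ)
    (n : ℕ)
    (hn : n = Γ.toAddSubgroup.relIndex
      (Γ.map ((β • (R.toLinearEquiv.toLinearMap :
        EuclideanSpace ℝ (Fin d) →ₗ[ℝ] EuclideanSpace ℝ (Fin d))).restrictScalars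
        ℤ)).toAddSubgroup)
    (hfin : n ≠ 0)
    (hcond : ∀ k : Fin m, ∃ J : Finset (Fin m), J.card = n ∧
      ∀ j ∈ J, ∃ γ ∈ Γ, ∃ γ' ∈ Γ, β • R (x k) - x j = γ + β • R γ') :
    (fun v => β • R v) '' L ⊆ L := by
  set f := ((β • (R.toLinearEquiv.toLinearMap :
    EuclideanSpace ℝ (Fin d) →ₗ[ℝ] EuclideanSpace ℝ (Fin d))).restrictScalars ℤ)
  rw [Submodule.map_toAddSubgroup] at hn
  subst hL hn
  refine AddSubgroup.image_iUnion_coset_subset_of_card_eq_relIndex Γ.toAddSubgroup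
    f.toAddMonoidHom x hdist hfin fun k => ?_
  obtain ⟨J, hJcard, hJ⟩ := hcond k
  refine ⟨J, hJcard, fun j hj => ?_⟩
  obtain ⟨γ, hγ, γ', hγ', heq⟩ := hJ j hj
  exact heq ▸ AddSubgroup.add_mem_sup hγ (AddSubgroup.mem_map_of_mem _ hγ')

/-- Theorem 3.2 (converse direction): if R ∈ OS(Γ), Γ ∩ βRΓ has finite index in βRΓ,
and every shift vector x_k admits n = [βRΓ : (Γ ∩ βRΓ)] distinct indices j with
βRx_k − x_j ∈ Γ + βRΓ, then βRL ⊆ L. -/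
theorem stmt7 (d m : ℕ) (hm : 0 < m)
    (Γ : Submodule ℤ (EuclideanSpace ℝ (Fin d)))
    [DiscreteTopology Γ] [IsZLattice ℝ Γ]
    (x : Fin m → EuclideanSpace ℝ (Fin d))
    (h0 : x ⟨0, hm⟩ = 0)
    (hdist : ∀ k1 k2 : Fin m, k1 ≠ k2 → x k1 - x k2 ∉ Γ)
    (L : Set (EuclideanSpace ℝ (Fin d)))
    (hL : L = ⋃ k : Fin m, (fun γ => x k + γ) '' (Γ : Set (EuclideanSpace ℝ (Fin d))))
    (R : EuclideanSpace ℝ (Fin d) ≃ₗᵢ[ℝ] EuclideanSpace ℝ (Fin d))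
    (hR : ∃ β' > (0 : ℝ), ∀ γ ∈ Γ, β' • R γ ∈ Γ)
    (β : ℝ) (hβ : 0 < β)
    (n : ℕ)
    (hn : n = Γ.toAddSubgroup.relIndex
      (Γ.map ((β • (R.toLinearEquiv.toLinearMap :
        EuclideanSpace ℝ (Fin d) →ₗ[ℝ] EuclideanSpace ℝ (Fin d))).restrictScalars
        ℤ)).toAddSubgroup)
    (hfin : n ≠ 0)
    (hcond : ∀ k : Fin m, ∃ J : Finset (Fin m), J.card = n ∧
      ∀ j ∈ J, ∃ γ ∈ Γ, ∃ γ' ∈ Γ, β • R (x k) - x j = γ + β • R γ') :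
    (fun v => β • R v) '' L ⊆ L :=
  stmt7_general d m Γ x hdist L hL R β n hn hfin hcond
end

section
/- Let L = ⋃_{k=0}^{m−1}(x_k + Γ) be a point packing generated by lattice Γ ⊆ ℝ^d, R a similarity isometry of L, β ∈ Scal_L(R), and n = [βRΓ : (Γ ∩ βRΓ)]. If 2 ≤ n ≤ m, then there exist distinct indices j_1, j_2 such that x_{j_2} − x_{j_1} ∈ (1/n)Γ. -/
/-!
Put `Γ' = βRΓ`. Since `[Γ' : Γ ∩ Γ'] = n ≠ 1`, some `g ∈ Γ'` lies outside `Γ`, and `n • g ∈ Γ`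
because `n` kills the finite quotient `Γ' / (Γ ∩ Γ')`. As `Γ ⊆ L` and `βR` maps `L` into itself,
`g ∈ L`, so `g ∈ x_j + Γ`; the index `j` is not `0` because `g ∉ Γ = x_0 + Γ`.
Then `n • x_j ∈ n • g + Γ = Γ`, i.e. `x_j - x_0 ∈ (1/n)Γ`.
-/

section PointPacking

variable {G ι : Type*} [AddCommGroup G]

def pointPacking (Γ : AddSubgroup G) (x : ι → G) : Set G :=
  ⋃ k, (fun γ => x k + γ) '' (Γ : Set G)

lemma subset_pointPacking {Γ : AddSubgroup G} {x : ι → G} {i₀ : ι} (h₀ : x i₀ = 0) :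
    (Γ : Set G) ⊆ pointPacking Γ x :=
  fun γ hγ => Set.mem_iUnion.mpr ⟨i₀, γ, hγ, by simp [h₀]⟩

lemma exists_ne_nsmul_mem_of_mem_pointPacking {Γ : AddSubgroup G} {x : ι → G} {i₀ : ι}
    (h₀ : x i₀ = 0) {g : G} (hg : g ∈ pointPacking Γ x) (hgΓ : g ∉ Γ) {n : ℕ}
    (hng : n • g ∈ Γ) : ∃ j ≠ i₀, n • x j ∈ Γ := by
  obtain ⟨j, γ, hγ, rfl⟩ := Set.mem_iUnion.mp hg
  refine ⟨j, ?_, ?_⟩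
  · rintro rfl
    exact hgΓ (by simpa [h₀] using hγ)
  · simpa [smul_add] using Γ.sub_mem hng (Γ.nsmul_mem hγ n)

end PointPacking

theorem stmt9_general (d m : ℕ) (hm : 0 < m)
    (Γ : Submodule ℤ (EuclideanSpace ℝ (Fin d)))
    (x : Fin m → EuclideanSpace ℝ (Fin d))
    (h0 : x ⟨0, hm⟩ = 0)
    (L : Set (EuclideanSpace ℝ (Fin d)))
    (hL : L = ⋃ k : Fin m, (fun γ => x k + γ) '' (Γ : Set (EuclideanSpace ℝ (Fin d))))
    (R : EuclideanSpace ℝ (Fin d) ≃ₗᵢ[ℝ] EuclideanSpace ℝ (Fin d))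
    (β : ℝ)
    (hsub : (fun v => β • R v) '' L ⊆ L)
    (n : ℕ)
    (hn : n = Γ.toAddSubgroup.relIndex
      (Γ.map ((β • (R.toLinearEquiv.toLinearMap :
        EuclideanSpace ℝ (Fin d) →ₗ[ℝ] EuclideanSpace ℝ (Fin d))).restrictScalars
        ℤ)).toAddSubgroup)
    (h2n : 2 ≤ n) :
    ∃ j1 j2 : Fin m, j1 ≠ j2 ∧ ∃ γ ∈ Γ, x j2 - x j1 = ((n : ℝ))⁻¹ • γ := by
  change L = pointPacking Γ.toAddSubgroup x at hL
  set Γ' := Γ.map ((β • (R.toLinearEquiv.toLinearMap :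
      EuclideanSpace ℝ (Fin d) →ₗ[ℝ] EuclideanSpace ℝ (Fin d))).restrictScalars ℤ)
  have hΓ'Γ : ¬ Γ'.toAddSubgroup ≤ Γ.toAddSubgroup := by
    rw [← AddSubgroup.relIndex_eq_one, ← hn]
    omega
  obtain ⟨g, hgΓ', hgΓ⟩ := SetLike.not_le_iff_exists.mp hΓ'Γ
  have hng : n • g ∈ Γ := hn ▸ Γ.toAddSubgroup.nsmul_relIndex_mem hgΓ'
  have hgL : g ∈ L := by
    obtain ⟨γ, hγ, rfl⟩ := hgΓ'
    exact hsub ⟨γ, hL ▸ subset_pointPacking h0 hγ, rfl⟩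
  obtain ⟨j, hj, hnx⟩ :=
    exists_ne_nsmul_mem_of_mem_pointPacking h0 (hL ▸ hgL) hgΓ hng
  refine ⟨⟨0, hm⟩, j, hj.symm, n • x j, hnx, ?_⟩
  rw [h0, sub_zero, ← Nat.cast_smul_eq_nsmul ℝ, inv_smul_smul₀ (by positivity)]

/-- Corollary 3.3: if 2 ≤ n ≤ m where n = [βRΓ : (Γ ∩ βRΓ)], then two distinct shift
vectors of L differ by an element of (1/n)Γ. -/
theorem stmt9 (d m : ℕ) (hm : 0 < m)
    (Γ : Submodule ℤ (EuclideanSpace ℝ (Fin d)))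
    [DiscreteTopology Γ] [IsZLattice ℝ Γ]
    (x : Fin m → EuclideanSpace ℝ (Fin d))
    (h0 : x ⟨0, hm⟩ = 0)
    (hdist : ∀ k1 k2 : Fin m, k1 ≠ k2 → x k1 - x k2 ∉ Γ)
    (L : Set (EuclideanSpace ℝ (Fin d)))
    (hL : L = ⋃ k : Fin m, (fun γ => x k + γ) '' (Γ : Set (EuclideanSpace ℝ (Fin d))))
    (R : EuclideanSpace ℝ (Fin d) ≃ₗᵢ[ℝ] EuclideanSpace ℝ (Fin d))
    (β : ℝ) (hβ : 0 < β)
    (hsub : (fun v => β • R v) '' L ⊆ L)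
    (n : ℕ)
    (hn : n = Γ.toAddSubgroup.relIndex
      (Γ.map ((β • (R.toLinearEquiv.toLinearMap :
        EuclideanSpace ℝ (Fin d) →ₗ[ℝ] EuclideanSpace ℝ (Fin d))).restrictScalars
        ℤ)).toAddSubgroup)
    (h2n : 2 ≤ n) (hnm : n ≤ m) :
    ∃ j1 j2 : Fin m, j1 ≠ j2 ∧ ∃ γ ∈ Γ, x j2 - x j1 = ((n : ℝ))⁻¹ • γ :=
  stmt9_general d m hm Γ x h0 L hL R β hsub n hn h2n
end

section
/- Let Γ = ℤ[i] be the Gaussian integers viewed as the square lattice in ℂ ≅ ℝ², and let L = ⋃_{k=0}^{m−1}(x_k + Γ) be a point packing with all shift vectors x_k ∈ ℚ(i). Then every similarity rotation of Γ is a similarity rotation of L; in particular SOS(L) = SOS(Γ). -/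
/-!
Clearing denominators of the shifts gives a positive integer `N` with `N • L ⊆ ℤ[i]`, while
`ℤ[i] ⊆ L` because one shift is `0`. Being squeezed as `ℤ[i] ⊆ L ⊆ N⁻¹ • ℤ[i]`, the two sets have
the same similarity rotations: a scale factor `β` for one of them gives `N * β` for the other.
-/

open Complex

/-- `u` need not be a unit here; on the unit circle these are the similarity rotations of `S`. -/
def IsSimilarityRotation {A : Type*} [Mul A] [SMul ℝ A] (S : Set A) (u : A) : Prop :=
  ∃ β > (0 : ℝ), ∀ z ∈ S, β • (u * z) ∈ S

theorem isSimilarityRotation_iff_of_subset_of_smul_mem {A : Type*} [Mul A] [MulAction ℝ A]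
    [SMulCommClass ℝ A A]
    {S T : Set A} {c : ℝ} (hST : S ⊆ T) (hc : 0 < c) (hcT : ∀ z ∈ T, c • z ∈ S) (u : A) :
    IsSimilarityRotation S u ↔ IsSimilarityRotation T u := by
  constructor
  · rintro ⟨β, hβ, hβS⟩
    refine ⟨c * β, mul_pos hc hβ, fun z hz => hST ?_⟩
    rw [mul_comm, mul_smul, ← mul_smul_comm]
    exact hβS _ (hcT z hz)
  · rintro ⟨β, hβ, hβT⟩
    refine ⟨c * β, mul_pos hc hβ, fun z hz => ?_⟩
    rw [mul_smul]
    exact hcT _ (hβT z (hST hz))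

theorem AddSubgroup.exists_pos_nsmul_mem_forall {M ι : Type*} [AddCommGroup M] [Fintype ι]
    (H : AddSubgroup M) {x : ι → M} (hx : ∀ i, ∃ n : ℕ, 0 < n ∧ n • x i ∈ H) :
    ∃ N : ℕ, 0 < N ∧ ∀ i, N • x i ∈ H := by
  choose n hn hnx using hx
  refine ⟨∏ i, n i, Finset.prod_pos fun i _ => hn i, fun i => ?_⟩
  obtain ⟨c, hc⟩ := Finset.dvd_prod_of_mem n (Finset.mem_univ i)
  rw [hc, mul_nsmul]
  exact H.nsmul_mem (hnx i) c

theorem AddSubgroup.nsmul_mem_of_mem_iUnion_vadd {M ι : Type*} [AddCommGroup M]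
    (H : AddSubgroup M) {x : ι → M} {N : ℕ} (hN : ∀ i, N • x i ∈ H) {z : M}
    (hz : z ∈ ⋃ i, (fun γ => x i + γ) '' (H : Set M)) : N • z ∈ H := by
  obtain ⟨i, γ, hγ, rfl⟩ := Set.mem_iUnion.1 hz
  rw [nsmul_add]
  exact H.add_mem (hN i) (H.nsmul_mem hγ N)

theorem GaussianInt.mem_range_toComplex {z : ℂ} :
    z ∈ GaussianInt.toComplex.range ↔ ∃ a b : ℤ, z = a + b * I := by
  constructor
  · rintro ⟨w, rfl⟩
    exact ⟨w.re, w.im, GaussianInt.toComplex_def w⟩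
  · rintro ⟨a, b, rfl⟩
    exact ⟨⟨a, b⟩, GaussianInt.toComplex_def' a b⟩

theorem GaussianInt.exists_pos_nsmul_ratCast_mem_range_toComplex (p q : ℚ) :
    ∃ n : ℕ, 0 < n ∧ n • ((p : ℂ) + q * I) ∈ GaussianInt.toComplex.range := by
  have hp : (p.den : ℂ) * p = p.num := by exact_mod_cast Rat.den_mul_eq_num p
  have hq : (q.den : ℂ) * q = q.num := by exact_mod_cast Rat.den_mul_eq_num q
  refine ⟨p.den * q.den, Nat.mul_pos p.pos q.pos,
    GaussianInt.mem_range_toComplex.2 ⟨p.num * q.den, q.num * p.den, ?_⟩⟩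
  rw [nsmul_eq_mul]
  push_cast
  linear_combination (q.den : ℂ) * hp + (p.den * I) * hq

theorem stmt12_general (m : ℕ) (hm : 0 < m)
    (G : Set ℂ) (hG : G = {z : ℂ | ∃ a b : ℤ, z = (a : ℂ) + (b : ℂ) * Complex.I})
    (x : Fin m → ℂ)
    (h0 : x ⟨0, hm⟩ = 0)
    (hx : ∀ k : Fin m, ∃ p q : ℚ, x k = (p : ℂ) + (q : ℂ) * Complex.I)
    (L : Set ℂ) (hL : L = ⋃ k : Fin m, (fun γ => x k + γ) '' G) :
    (∀ u : ℂ, ‖u‖ = 1 →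
        (∃ β > (0 : ℝ), ∀ z ∈ G, β • (u * z) ∈ G) →
        (∃ β > (0 : ℝ), ∀ z ∈ L, β • (u * z) ∈ L)) ∧
    {u : ℂ | ‖u‖ = 1 ∧ ∃ β > (0 : ℝ), ∀ z ∈ L, β • (u * z) ∈ L} =
      {u : ℂ | ‖u‖ = 1 ∧ ∃ β > (0 : ℝ), ∀ z ∈ G, β • (u * z) ∈ G} := by
  set H := GaussianInt.toComplex.range.toAddSubgroup
  have hGH : G = H := by
    ext z
    exact hG ▸ GaussianInt.mem_range_toComplex.symm
  obtain ⟨N, hN, hNx⟩ := H.exists_pos_nsmul_mem_forall fun k => by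
    obtain ⟨p, q, hpq⟩ := hx k
    exact hpq ▸ GaussianInt.exists_pos_nsmul_ratCast_mem_range_toComplex p q
  have hGL : G ⊆ L := fun z hz =>
    hL ▸ Set.mem_iUnion.2 ⟨⟨0, hm⟩, z, hz, by simp only [h0, zero_add]⟩
  have hNL : ∀ z ∈ L, (N : ℝ) • z ∈ G := fun z hz => by
    rw [Nat.cast_smul_eq_nsmul, hGH]
    exact H.nsmul_mem_of_mem_iUnion_vadd hNx (hGH ▸ hL ▸ hz)
  have key := isSimilarityRotation_iff_of_subset_of_smul_mem hGL (Nat.cast_pos.2 hN) hNL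
  exact ⟨fun u _ => (key u).1, Set.ext fun u => and_congr_right fun _ => (key u).symm⟩

/-- Proposition 4.1 (square lattice case): for a point packing L generated by ℤ[i]
with rational shift vectors, every similarity rotation of ℤ[i] is a similarity
rotation of L, and SOS(L) = SOS(ℤ[i]). -/
theorem stmt12 (m : ℕ) (hm : 0 < m)
    (G : Set ℂ) (hG : G = {z : ℂ | ∃ a b : ℤ, z = (a : ℂ) + (b : ℂ) * Complex.I})
    (x : Fin m → ℂ)
    (h0 : x ⟨0, hm⟩ = 0)
    (hx : ∀ k : Fin m, ∃ p q : ℚ, x k = (p : ℂ) + (q : ℂ) * Complex.I)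
    (hdist : ∀ k1 k2 : Fin m, k1 ≠ k2 → x k1 - x k2 ∉ G)
    (L : Set ℂ) (hL : L = ⋃ k : Fin m, (fun γ => x k + γ) '' G) :
    (∀ u : ℂ, ‖u‖ = 1 →
        (∃ β > (0 : ℝ), ∀ z ∈ G, β • (u * z) ∈ G) →
        (∃ β > (0 : ℝ), ∀ z ∈ L, β • (u * z) ∈ L)) ∧
    {u : ℂ | ‖u‖ = 1 ∧ ∃ β > (0 : ℝ), ∀ z ∈ L, β • (u * z) ∈ L} =
      {u : ℂ | ‖u‖ = 1 ∧ ∃ β > (0 : ℝ), ∀ z ∈ G, β • (u * z) ∈ G} :=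
  stmt12_general m hm G hG x h0 hx L hL
end

section
/- Let Γ = ℤ[ω] with ω = e^{2πi/3} be the hexagonal lattice in ℂ, and let L = ⋃_{k=0}^{m−1}(x_k + Γ) be a point packing with all shift vectors x_k ∈ ℚ(ω). Then every similarity isometry of Γ (rotation or reflection) is a similarity isometry of L; in particular OS(L) = OS(Γ). -/
/-!
A packing `L` with rational shifts is sandwiched between two scaled copies of its lattice:
`Γ ⊆ L` because one shift is `0`, and `N • L ⊆ Γ` once `N` clears the denominators of all
shifts. Scaling by a positive real commutes with a linear isometry, so a similarity of either
set becomes one of the other after multiplying its scale factor by `N`.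
-/

section Similarity

variable {E : Type*} [AddCommGroup E] [Module ℝ E]
  {F : Type*} [FunLike F E E] [LinearMapClass F ℝ E E]

theorem exists_smul_mem_iff_of_subset_of_smul_mem {S T : Set E} {c : ℝ} (hc : 0 < c)
    (hST : S ⊆ T) (hTS : ∀ z ∈ T, c • z ∈ S) (f : F) :
    (∃ β > (0 : ℝ), ∀ z ∈ S, β • f z ∈ S) ↔ (∃ β > (0 : ℝ), ∀ z ∈ T, β • f z ∈ T) := by
  constructor
  · rintro ⟨β, hβ, hf⟩
    refine ⟨c * β, mul_pos hc hβ, fun z hz => ?_⟩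
    have hscale : (c * β) • f z = β • f (c • z) := by
      rw [map_smul, smul_smul, mul_comm]
    exact hscale ▸ hST (hf _ (hTS z hz))
  · rintro ⟨β, hβ, hf⟩
    refine ⟨c * β, mul_pos hc hβ, fun z hz => ?_⟩
    rw [← smul_smul]
    exact hTS _ (hf z (hST hz))

end Similarity

theorem AddSubmonoid.exists_pos_nsmul_forall_mem {A ι : Type*} [AddMonoid A] [Fintype ι]
    (H : AddSubmonoid A) (x : ι → A) (h : ∀ k, ∃ n : ℕ, 0 < n ∧ n • x k ∈ H) :
    ∃ N : ℕ, 0 < N ∧ ∀ k, N • x k ∈ H := by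
  classical
  choose n hn hnH using h
  refine ⟨∏ k, n k, Finset.prod_pos fun k _ => hn k, fun k => ?_⟩
  obtain ⟨c, hc⟩ := Finset.dvd_prod_of_mem n (Finset.mem_univ k)
  rw [hc, mul_nsmul]
  exact H.nsmul_mem (hnH k) c

def Complex.intSpan (ω : ℂ) : AddSubgroup ℂ where
  carrier := {z | ∃ a b : ℤ, z = a + b * ω}
  zero_mem' := ⟨0, 0, by simp⟩
  add_mem' := by
    rintro _ _ ⟨a, b, rfl⟩ ⟨c, d, rfl⟩
    exact ⟨a + c, b + d, by push_cast; ring⟩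
  neg_mem' := by
    rintro _ ⟨a, b, rfl⟩
    exact ⟨-a, -b, by push_cast; ring⟩

theorem Complex.den_mul_den_nsmul_mem_intSpan (ω : ℂ) (p q : ℚ) :
    (p.den * q.den) • ((p : ℂ) + q * ω) ∈ Complex.intSpan ω := by
  have hp : (p : ℂ) * p.den = p.num := by exact_mod_cast Rat.mul_den_eq_num p
  have hq : (q : ℂ) * q.den = q.num := by exact_mod_cast Rat.mul_den_eq_num q
  refine ⟨p.num * q.den, q.num * p.den, ?_⟩
  rw [nsmul_eq_mul]
  push_cast
  linear_combination (q.den : ℂ) * hp + (p.den : ℂ) * ω * hq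

theorem stmt13_general (m : ℕ) (hm : 0 < m)
    (ω : ℂ)
    (G : Set ℂ) (hG : G = {z : ℂ | ∃ a b : ℤ, z = (a : ℂ) + (b : ℂ) * ω})
    (x : Fin m → ℂ)
    (h0 : x ⟨0, hm⟩ = 0)
    (hx : ∀ k : Fin m, ∃ p q : ℚ, x k = (p : ℂ) + (q : ℂ) * ω)
    (L : Set ℂ) (hL : L = ⋃ k : Fin m, (fun γ => x k + γ) '' G) :
    (∀ f : ℂ ≃ₗᵢ[ℝ] ℂ,
        (∃ β > (0 : ℝ), ∀ z ∈ G, β • f z ∈ G) →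
        (∃ β > (0 : ℝ), ∀ z ∈ L, β • f z ∈ L)) ∧
    {f : ℂ ≃ₗᵢ[ℝ] ℂ | ∃ β > (0 : ℝ), ∀ z ∈ L, β • f z ∈ L} =
      {f : ℂ ≃ₗᵢ[ℝ] ℂ | ∃ β > (0 : ℝ), ∀ z ∈ G, β • f z ∈ G} := by
  change G = Complex.intSpan ω at hG
  obtain ⟨N, hN, hNx⟩ := (Complex.intSpan ω).toAddSubmonoid.exists_pos_nsmul_forall_mem x
    fun k => by
      obtain ⟨p, q, hpq⟩ := hx k
      exact ⟨_, Nat.mul_pos p.pos q.pos, hpq ▸ Complex.den_mul_den_nsmul_mem_intSpan ω p q⟩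
  have hGL : G ⊆ L := fun z hz =>
    hL ▸ Set.mem_iUnion.2 ⟨⟨0, hm⟩, z, hz, by simp [h0]⟩
  have hLG : ∀ z ∈ L, (N : ℝ) • z ∈ G := by
    intro z hz
    obtain ⟨k, γ, hγ, rfl⟩ := Set.mem_iUnion.1 (hL ▸ hz)
    rw [hG] at hγ ⊢
    rw [Nat.cast_smul_eq_nsmul, smul_add]
    exact add_mem (hNx k) (nsmul_mem hγ N)
  have hiff := fun f : ℂ ≃ₗᵢ[ℝ] ℂ =>
    exists_smul_mem_iff_of_subset_of_smul_mem (Nat.cast_pos.2 hN) hGL hLG f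
  exact ⟨fun f => (hiff f).1, Set.ext fun f => (hiff f).symm⟩

/-- Proposition 4.1 (hexagonal lattice case): for a point packing L generated by ℤ[ω],
ω = e^{2πi/3}, with shift vectors in ℚ(ω), every similarity isometry of ℤ[ω] is a
similarity isometry of L, and OS(L) = OS(ℤ[ω]). -/
theorem stmt13 (m : ℕ) (hm : 0 < m)
    (ω : ℂ) (hω : ω = Complex.exp (2 * Real.pi * Complex.I / 3))
    (G : Set ℂ) (hG : G = {z : ℂ | ∃ a b : ℤ, z = (a : ℂ) + (b : ℂ) * ω})
    (x : Fin m → ℂ)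
    (h0 : x ⟨0, hm⟩ = 0)
    (hx : ∀ k : Fin m, ∃ p q : ℚ, x k = (p : ℂ) + (q : ℂ) * ω)
    (hdist : ∀ k1 k2 : Fin m, k1 ≠ k2 → x k1 - x k2 ∉ G)
    (L : Set ℂ) (hL : L = ⋃ k : Fin m, (fun γ => x k + γ) '' G) :
    (∀ f : ℂ ≃ₗᵢ[ℝ] ℂ,
        (∃ β > (0 : ℝ), ∀ z ∈ G, β • f z ∈ G) →
        (∃ β > (0 : ℝ), ∀ z ∈ L, β • f z ∈ L)) ∧
    {f : ℂ ≃ₗᵢ[ℝ] ℂ | ∃ β > (0 : ℝ), ∀ z ∈ L, β • f z ∈ L} =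
      {f : ℂ ≃ₗᵢ[ℝ] ℂ | ∃ β > (0 : ℝ), ∀ z ∈ G, β • f z ∈ G} :=
  stmt13_general m hm ω G hG x h0 hx L hL
end

section
/- Let Γ = ℤ[i] and L = Γ ∪ (1/2 + Γ) be the 1×2 rectangular lattice viewed as a point packing. If R is a similarity isometry of L with scaling factor β > 0 (i.e., βRL ⊆ L with finite index), then βRΓ ⊆ Γ, i.e., the index n = [βRΓ : (Γ ∩ βRΓ)] equals 1. -/
/-!
Since `2 • L ⊆ Γ`, the hypothesis applied to `1/2 ∈ L` gives `βR1 = 2 · βR(1/2) ∈ Γ`.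
A real-linear isometry of `ℂ` is `z ↦ R1 · z` or `z ↦ R1 · z̄`, and `Γ` is a ring stable under
conjugation, so `βRz = βR1 · z` or `βR1 · z̄` lies in `Γ` for every `z ∈ Γ`.
-/

open Complex ComplexConjugate

namespace GaussianInt

theorem mem_range_toComplex_iff {z : ℂ} : z ∈ toComplex.range ↔ ∃ a b : ℤ, z = a + b * I := by
  constructor
  · rintro ⟨x, rfl⟩
    exact ⟨x.re, x.im, toComplex_def x⟩
  · rintro ⟨a, b, rfl⟩
    exact ⟨⟨a, b⟩, toComplex_def' a b⟩

theorem conj_mem_range_toComplex {z : ℂ} (hz : z ∈ toComplex.range) :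
    conj z ∈ toComplex.range := by
  obtain ⟨x, rfl⟩ := hz
  exact ⟨star x, toComplex_star x⟩

end GaussianInt

theorem Subring.two_mul_mem_of_mem_union_half_add (S : Subring ℂ) {z : ℂ}
    (hz : z ∈ (S : Set ℂ) ∪ (fun γ => (1 / 2 : ℂ) + γ) '' S) : 2 * z ∈ S := by
  rcases hz with hz | ⟨γ, hγ, rfl⟩
  · exact S.mul_mem (ofNat_mem S 2) hz
  · rw [mul_add, mul_one_div_cancel two_ne_zero]
    exact S.add_mem S.one_mem (S.mul_mem (ofNat_mem S 2) hγ)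

theorem LinearIsometryEquiv.complex_eq_mul_or_eq_mul_conj (R : ℂ ≃ₗᵢ[ℝ] ℂ) :
    (∀ z, R z = R 1 * z) ∨ ∀ z, R z = R 1 * conj z := by
  obtain ⟨a, rfl | rfl⟩ := linear_isometry_complex R
  · left; simp [rotation_apply]
  · right; simp [rotation_apply]

theorem Subring.smul_apply_mem_of_smul_apply_one_mem (S : Subring ℂ)
    (hS : ∀ z ∈ S, conj z ∈ S) (R : ℂ ≃ₗᵢ[ℝ] ℂ) (β : ℝ) (h1 : β • R 1 ∈ S) :
    ∀ z ∈ S, β • R z ∈ S := by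
  intro z hz
  rcases R.complex_eq_mul_or_eq_mul_conj with hR | hR
  · rw [hR, ← smul_mul_assoc]
    exact S.mul_mem h1 hz
  · rw [hR, ← smul_mul_assoc]
    exact S.mul_mem h1 (hS z hz)

theorem stmt14_general
    (G : Set ℂ) (hG : G = {z : ℂ | ∃ a b : ℤ, z = (a : ℂ) + (b : ℂ) * Complex.I})
    (L : Set ℂ) (hL : L = G ∪ ((fun γ => (1 / 2 : ℂ) + γ) '' G))
    (R : ℂ ≃ₗᵢ[ℝ] ℂ) (β : ℝ)
    (hsub : ∀ z ∈ L, β • R z ∈ L) :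
    ∀ z ∈ G, β • R z ∈ G := by
  obtain rfl : G = GaussianInt.toComplex.range :=
    hG.trans (Set.ext fun _ => GaussianInt.mem_range_toComplex_iff.symm)
  subst hL
  refine Subring.smul_apply_mem_of_smul_apply_one_mem _
    (fun _ => GaussianInt.conj_mem_range_toComplex) R β ?_
  have h_half : β • R (1 / 2) ∈ _ := hsub (1 / 2) (Or.inr ⟨0, zero_mem _, add_zero _⟩)
  have h_one : β • R 1 = 2 * β • R (1 / 2) := by
    rw [mul_smul_comm, two_mul, ← map_add, add_halves]
  rw [h_one]
  exact Subring.two_mul_mem_of_mem_union_half_add _ h_half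

/-- For the 1×2 rectangular lattice L = ℤ[i] ∪ (1/2 + ℤ[i]) viewed as a point packing:
if βRL ⊆ L for a linear isometry R and β > 0, then βRΓ ⊆ Γ (i.e. n = 1). -/
theorem stmt14
    (G : Set ℂ) (hG : G = {z : ℂ | ∃ a b : ℤ, z = (a : ℂ) + (b : ℂ) * Complex.I})
    (L : Set ℂ) (hL : L = G ∪ ((fun γ => (1 / 2 : ℂ) + γ) '' G))
    (R : ℂ ≃ₗᵢ[ℝ] ℂ) (β : ℝ) (hβ : 0 < β)
    (hsub : ∀ z ∈ L, β • R z ∈ L) :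
    ∀ z ∈ G, β • R z ∈ G :=
  stmt14_general G hG L hL R β hsub
end

section
/- Let Γ = ℤ[ω] with ω = e^{2πi/3} and L = Γ ∪ ((2+ω)/3 + Γ) be the hexagonal packing. If R is a similarity isometry of L with scaling factor β > 0, then βRΓ ⊆ Γ; i.e., every component of βRL is contained in exactly one component of L. -/
/-!
The map `z ↦ β • R z` is odd. If it sent some `z ∈ Γ` into the translate `c + Γ`,
`c = (2 + ω) / 3`, then `-z ∈ Γ` would be sent to `-(c + γ₁)`, which lies in `L` only
through `c + Γ` (since `c + γ₁ ∉ Γ`), so `c + c ∈ Γ`. Comparing imaginary parts shows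
that `2c = (4 + 2ω) / 3` is not in `ℤ + ℤω`.
-/

theorem AddSubgroup.mapsTo_of_odd_of_mapsTo_union_translate {A : Type*} [AddCommGroup A]
    (Γ : AddSubgroup A) {c : A} (hc : c + c ∉ Γ) {f : A → A} (hf : ∀ z, f (-z) = -f z)
    (hL : Set.MapsTo f (Γ ∪ (fun γ => c + γ) '' Γ) (Γ ∪ (fun γ => c + γ) '' Γ)) :
    Set.MapsTo f Γ Γ := by
  intro z hz
  rcases hL (Or.inl (neg_mem hz)) with hneg | ⟨γ₂, hγ₂, h₂⟩
  · simpa [hf] using hneg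
  rcases hL (Or.inl hz) with hpos | ⟨γ₁, hγ₁, h₁⟩
  · exact hpos
  refine absurd ?_ hc
  simp only at h₁ h₂
  have hsum : c + c = (c + γ₁) + (c + γ₂) - (γ₁ + γ₂) := by abel
  rw [hsum, h₁, h₂, hf, add_neg_cancel, zero_sub]
  exact neg_mem (add_mem hγ₁ hγ₂)

theorem Complex.im_exp_two_pi_I_div_three_ne_zero :
    (Complex.exp (2 * Real.pi * Complex.I / 3)).im ≠ 0 := by
  have h : 2 * Real.pi * Complex.I / 3 = (2 * Real.pi / 3 : ℝ) * Complex.I := by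
    push_cast; ring
  rw [h, Complex.exp_ofReal_mul_I_im]
  exact (Real.sin_pos_of_pos_of_lt_pi (by positivity) (by linarith [Real.pi_pos])).ne'

theorem Complex.two_add_div_three_add_self_notMem_span {ω : ℂ} (hω : ω.im ≠ 0) :
    (2 + ω) / 3 + (2 + ω) / 3 ∉ Submodule.span ℤ {1, ω} := by
  rw [Submodule.mem_span_pair]
  rintro ⟨a, b, hab⟩
  have him := congrArg Complex.im hab
  simp only [zsmul_eq_mul, mul_one, add_im, intCast_im, mul_im, intCast_re, zero_mul, add_zero,
    zero_add, div_ofNat_im, im_ofNat] at him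
  have hb : (3 * b : ℝ) = 2 := mul_right_cancel₀ hω (by linarith)
  have hb' : 3 * b = 2 := by exact_mod_cast hb
  omega

theorem stmt15_general
    (ω : ℂ) (hω : ω = Complex.exp (2 * Real.pi * Complex.I / 3))
    (G : Set ℂ) (hG : G = {z : ℂ | ∃ a b : ℤ, z = (a : ℂ) + (b : ℂ) * ω})
    (L : Set ℂ) (hL : L = G ∪ ((fun γ => (2 + ω) / 3 + γ) '' G))
    (R : ℂ ≃ₗᵢ[ℝ] ℂ) (β : ℝ)
    (hsub : ∀ z ∈ L, β • R z ∈ L) :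
    ∀ z ∈ G, β • R z ∈ G := by
  have hG_span : G = (Submodule.span ℤ {1, ω}).toAddSubgroup := by
    ext z
    simp [hG, Submodule.mem_span_pair, eq_comm]
  subst hL
  rw [hG_span] at hsub ⊢
  have hc := Complex.two_add_div_three_add_self_notMem_span
    (hω ▸ Complex.im_exp_two_pi_I_div_three_ne_zero)
  exact AddSubgroup.mapsTo_of_odd_of_mapsTo_union_translate _ hc (fun z => by simp) hsub

/-- For the hexagonal packing L = ℤ[ω] ∪ ((2+ω)/3 + ℤ[ω]), ω = e^{2πi/3}: if βRL ⊆ L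
for a linear isometry R and β > 0, then βRΓ ⊆ Γ, i.e. every component of βRL lies in
exactly one component of L. -/
theorem stmt15
    (ω : ℂ) (hω : ω = Complex.exp (2 * Real.pi * Complex.I / 3))
    (G : Set ℂ) (hG : G = {z : ℂ | ∃ a b : ℤ, z = (a : ℂ) + (b : ℂ) * ω})
    (L : Set ℂ) (hL : L = G ∪ ((fun γ => (2 + ω) / 3 + γ) '' G))
    (R : ℂ ≃ₗᵢ[ℝ] ℂ) (β : ℝ) (hβ : 0 < β)
    (hsub : ∀ z ∈ L, β • R z ∈ L) :
    ∀ z ∈ G, β • R z ∈ G :=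
  stmt15_general ω hω G hG L hL R β hsub
end
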